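/- Let n ∈ ℕ, let S_c : ℝⁿ → ℝ be differentiable, and let R : Fin n → (ℝⁿ → ℝ) be a family of differentiable functions. Define S̄ : ℝⁿ × ℝⁿ → ℝ by S̄(x, k) := S_c(x) − Σ_α R^α(x) k_α, and define the bracket B(X, Y)(x, k) := Σ_α (∂X/∂x_α · ∂Y/∂k_α + ∂X/∂k_α · ∂Y/∂x_α). Then B(S̄, S̄)(x, k) = 0 for all (x, k) ∈ ℝⁿ × ℝⁿ if and only if both (i) Σ_α R^α(x) ∂S_c/∂x_α(x) = 0 for all x (gauge invariance of the classical action), and (ii) Σ_α R^α(x) ∂R^β/∂x_α(x) = 0 for all x and all β (closure of the gauge algebra). -/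

import Mathlib

/-!
Writing `S̄(x, k) = S_c(x) - ∑_β R^β(x) k_β`, one has `∂S̄/∂k_α = -R^α(x)`, so the bracket is
`B(S̄, S̄)(x, k) = -2 ∑_α R^α(x) ∂S̄/∂x_α = -2 (R·S_c(x) - ∑_β (R·R^β)(x) k_β)`, where `R·f`
is the derivative of `f` along the vector field `R`. This is affine in the antifields `k`, and an
affine function vanishes identically iff its constant term and all its coefficients vanish.
-/

open Finset

theorem forall_sub_sum_mul_eq_zero_iff {A ι : Type*} [CommRing A] [Fintype ι] [DecidableEq ι]
    (a : A) (c : ι → A) :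
    (∀ k : ι → A, a - ∑ i, c i * k i = 0) ↔ a = 0 ∧ ∀ i, c i = 0 := by
  constructor
  · intro h
    have ha : a = 0 := by simpa using h 0
    refine ⟨ha, fun i => ?_⟩
    simpa [ha, Pi.single_apply] using h (Pi.single i 1)
  · rintro ⟨rfl, hc⟩ k
    simp [hc]

theorem sum_mul_apply_single {R ι : Type*} [CommSemiring R] [TopologicalSpace R] [Fintype ι]
    [DecidableEq ι] (L : (ι → R) →L[R] R) (v : ι → R) :
    ∑ i, v i * L (Pi.single i 1) = L v := by
  conv_rhs => rw [pi_eq_sum_univ' v, map_sum]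
  simp only [map_smul, smul_eq_mul]

section ExtendedAction

variable {E ι : Type*} [NormedAddCommGroup E] [NormedSpace ℝ E] [Fintype ι]

/-- The non-gauge-fixed solution `S̄_d` of the master equation. -/
def extendedAction (Sc : E → ℝ) (R : ι → E → ℝ) : E × (ι → ℝ) → ℝ :=
  fun q => Sc q.1 - ∑ β, R β q.1 * q.2 β

theorem fderiv_extendedAction_apply {Sc : E → ℝ} {R : ι → E → ℝ} {x : E} {k : ι → ℝ}
    (hSc : DifferentiableAt ℝ Sc x) (hR : ∀ β, DifferentiableAt ℝ (R β) x)
    (v : E) (w : ι → ℝ) :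
    fderiv ℝ (extendedAction Sc R) (x, k) (v, w) =
      fderiv ℝ Sc x v - ∑ β, (fderiv ℝ (R β) x v * k β + R β x * w β) := by
  have hterm : ∀ β, HasFDerivAt (fun q : E × (ι → ℝ) => R β q.1 * q.2 β)
      (R β x • (ContinuousLinearMap.proj β).comp (ContinuousLinearMap.snd ℝ E (ι → ℝ)) +
        k β • (fderiv ℝ (R β) x).comp (ContinuousLinearMap.fst ℝ E (ι → ℝ))) (x, k) := fun β =>
    ((hR β).hasFDerivAt.comp (x, k) hasFDerivAt_fst).mul
      ((ContinuousLinearMap.proj β).comp (ContinuousLinearMap.snd ℝ E (ι → ℝ))).hasFDerivAt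
  have hS : HasFDerivAt (extendedAction Sc R) _ (x, k) :=
    (hSc.hasFDerivAt.comp (x, k) hasFDerivAt_fst).fun_sub
      (HasFDerivAt.fun_sum (u := univ) fun β _ => hterm β)
  rw [hS.fderiv]
  simp [mul_comm, add_comm]

end ExtendedAction

section Antibracket

variable {ι : Type*} [Fintype ι] [DecidableEq ι]

/-- The antibracket, on even fields `x` and antifields `k` (hence symmetric). -/
noncomputable def antibracket (X Y : (ι → ℝ) × (ι → ℝ) → ℝ) (p : (ι → ℝ) × (ι → ℝ)) : ℝ :=
  ∑ α, (fderiv ℝ X p (Pi.single α 1, 0) * fderiv ℝ Y p (0, Pi.single α 1) +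
    fderiv ℝ X p (0, Pi.single α 1) * fderiv ℝ Y p (Pi.single α 1, 0))

theorem antibracket_extendedAction_self {Sc : (ι → ℝ) → ℝ} {R : ι → (ι → ℝ) → ℝ}
    {x k : ι → ℝ} (hSc : DifferentiableAt ℝ Sc x) (hR : ∀ β, DifferentiableAt ℝ (R β) x) :
    antibracket (extendedAction Sc R) (extendedAction Sc R) (x, k) =
      -2 * (fderiv ℝ Sc x (fun α => R α x) -
        ∑ β, fderiv ℝ (R β) x (fun α => R α x) * k β) := by
  have hk : ∀ α, fderiv ℝ (extendedAction Sc R) (x, k) (0, Pi.single α 1) = -R α x := fun α => by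
    simp [fderiv_extendedAction_apply hSc hR, Pi.single_apply]
  have hx : ∑ α, R α x * fderiv ℝ (extendedAction Sc R) (x, k) (Pi.single α 1, 0) =
      fderiv ℝ (extendedAction Sc R) (x, k) (fun α => R α x, 0) :=
    sum_mul_apply_single ((fderiv ℝ (extendedAction Sc R) (x, k)).comp (.inl ℝ _ _)) _
  calc antibracket (extendedAction Sc R) (extendedAction Sc R) (x, k)
      = -2 * ∑ α, R α x * fderiv ℝ (extendedAction Sc R) (x, k) (Pi.single α 1, 0) := by
        simp only [antibracket, hk, mul_sum]
        exact sum_congr rfl fun α _ => by ring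
    _ = _ := by
        rw [hx, fderiv_extendedAction_apply hSc hR]
        simp

end Antibracket

/-- Finite-dimensional model of the BV master equation: for `S̄(x,k) = S_c(x) − Σ_α R^α(x) k_α`
and the bracket `B(X,Y) = Σ_α (∂X/∂x_α ∂Y/∂k_α + ∂X/∂k_α ∂Y/∂x_α)`, one has
`B(S̄,S̄) ≡ 0` iff the classical action is gauge invariant and the gauge algebra closes. -/
theorem master_equation_splits (n : ℕ) (Sc : (Fin n → ℝ) → ℝ)
    (R : Fin n → (Fin n → ℝ) → ℝ)
    (hSc : Differentiable ℝ Sc) (hR : ∀ α, Differentiable ℝ (R α)) :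
    (∀ p : (Fin n → ℝ) × (Fin n → ℝ),
        (∑ α : Fin n,
          (fderiv ℝ (fun q : (Fin n → ℝ) × (Fin n → ℝ) =>
              Sc q.1 - ∑ β : Fin n, R β q.1 * q.2 β) p (Pi.single α 1, 0) *
            fderiv ℝ (fun q : (Fin n → ℝ) × (Fin n → ℝ) =>
              Sc q.1 - ∑ β : Fin n, R β q.1 * q.2 β) p (0, Pi.single α 1) +
          fderiv ℝ (fun q : (Fin n → ℝ) × (Fin n → ℝ) =>
              Sc q.1 - ∑ β : Fin n, R β q.1 * q.2 β) p (0, Pi.single α 1) *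
            fderiv ℝ (fun q : (Fin n → ℝ) × (Fin n → ℝ) =>
              Sc q.1 - ∑ β : Fin n, R β q.1 * q.2 β) p (Pi.single α 1, 0))) = 0)
    ↔ ((∀ x : Fin n → ℝ, ∑ α : Fin n, R α x * fderiv ℝ Sc x (Pi.single α 1) = 0) ∧
        (∀ x : Fin n → ℝ, ∀ β : Fin n,
          ∑ α : Fin n, R α x * fderiv ℝ (R β) x (Pi.single α 1) = 0)) := by
  have hB : ∀ x k, antibracket (extendedAction Sc R) (extendedAction Sc R) (x, k) = _ :=
    fun x k => antibracket_extendedAction_self (hSc x) (fun β => hR β x)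
  show (∀ p, antibracket (extendedAction Sc R) (extendedAction Sc R) p = 0) ↔ _
  simp only [Prod.forall, hB, sum_mul_apply_single, mul_eq_zero, neg_eq_zero, two_ne_zero,
    false_or, forall_sub_sum_mul_eq_zero_iff, forall_and]
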